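/- arXiv:1107.2443 — 6 statements merged into one kernel-verified Lean document; each statement's English description precedes it below -/
import Mathlib

section
/- Let V be a finite set with |V| = n, and let (A_i, B_i) and (A_j, B_j) be two distinct partitions of V into nonempty parts, with cut edge sets E_i and E_j respectively. Then the symmetric difference of E_i and E_j has at least n - 1 elements. -/
/-- The set of cut edges between the two parts `A` and `B` of a partition. -/
def cutEdges {V : Type*} [DecidableEq V] (A B : Finset V) : Finset (Sym2 V) :=
  (A ×ˢ B).image fun p => s(p.1, p.2)

lemma mem_cutEdges {V : Type*} [DecidableEq V] {A B : Finset V} {u v : V} :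
    s(u, v) ∈ cutEdges A B ↔ (u ∈ A ∧ v ∈ B) ∨ (v ∈ A ∧ u ∈ B) := by
  simp only [cutEdges, Finset.mem_image, Finset.mem_product, Prod.exists, Sym2.eq, Sym2.rel_iff',
    Prod.mk.injEq, Prod.swap_prod_mk]
  constructor
  · rintro ⟨a, b, ⟨ha, hb⟩, (⟨rfl, rfl⟩ | ⟨rfl, rfl⟩)⟩ <;> tauto
  · rintro (⟨hu, hv⟩ | ⟨hv, hu⟩)
    · exact ⟨u, v, ⟨hu, hv⟩, Or.inl ⟨rfl, rfl⟩⟩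
    · exact ⟨v, u, ⟨hv, hu⟩, Or.inr ⟨rfl, rfl⟩⟩

/-- If `(A₁, B₁)` and `(A₂, B₂)` are two distinct (as unordered pairs of parts)
partitions of an `n`-element set `V` into nonempty parts, then the symmetric difference
of their cut edge sets has at least `n - 1` elements. -/
theorem cutEdges_symmDiff_card {V : Type*} [Fintype V] [DecidableEq V] (n : ℕ)
    (hcard : Fintype.card V = n)
    (A₁ B₁ A₂ B₂ : Finset V)
    (hA₁ : A₁.Nonempty) (hB₁ : B₁.Nonempty) (hd₁ : Disjoint A₁ B₁)
    (hu₁ : A₁ ∪ B₁ = Finset.univ)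
    (hA₂ : A₂.Nonempty) (hB₂ : B₂.Nonempty) (hd₂ : Disjoint A₂ B₂)
    (hu₂ : A₂ ∪ B₂ = Finset.univ)
    (hne : ({A₁, B₁} : Finset (Finset V)) ≠ {A₂, B₂}) :
    n - 1 ≤ (symmDiff (cutEdges A₁ B₁) (cutEdges A₂ B₂)).card := by
  classical
  have hcomp₁ : B₁ = A₁ᶜ := by
    ext x
    have hx : x ∈ A₁ ∪ B₁ := hu₁ ▸ Finset.mem_univ x
    simp only [Finset.mem_union] at hx
    simp only [Finset.mem_compl]
    constructor
    · intro h h'; exact Finset.disjoint_left.mp hd₁ h' h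
    · intro h; tauto
  have hcomp₂ : B₂ = A₂ᶜ := by
    ext x
    have hx : x ∈ A₂ ∪ B₂ := hu₂ ▸ Finset.mem_univ x
    simp only [Finset.mem_union] at hx
    simp only [Finset.mem_compl]
    constructor
    · intro h h'; exact Finset.disjoint_left.mp hd₂ h' h
    · intro h; tauto
  set S : Finset V := (A₁ \ A₂) ∪ (A₂ \ A₁) with hS
  have hSmem : ∀ x, x ∈ S ↔ ((x ∈ A₁ ∧ x ∉ A₂) ∨ (x ∈ A₂ ∧ x ∉ A₁)) := by
    intro x; simp [hS, Finset.mem_union, Finset.mem_sdiff]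
  have hSne : S.Nonempty := by
    by_contra h
    rw [Finset.not_nonempty_iff_eq_empty] at h
    have hAA : A₁ = A₂ := by
      ext x
      have := hSmem x
      rw [h] at this
      simp only [Finset.notMem_empty, false_iff] at this
      tauto
    apply hne
    rw [hAA, hcomp₁, hcomp₂, hAA]
  have hScne : Sᶜ.Nonempty := by
    by_contra h
    rw [Finset.not_nonempty_iff_eq_empty, Finset.compl_eq_empty_iff] at h
    have hAB : A₂ = B₁ := by
      ext x
      have hx : x ∈ S := h ▸ Finset.mem_univ x
      rw [hSmem] at hx
      rw [hcomp₁, Finset.mem_compl]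
      tauto
    have hBA : B₂ = A₁ := by
      ext x
      have hx : x ∈ S := h ▸ Finset.mem_univ x
      rw [hSmem] at hx
      rw [hcomp₂, Finset.mem_compl]
      tauto
    apply hne
    rw [← hAB, ← hBA, Finset.pair_comm]
  have hedge : symmDiff (cutEdges A₁ B₁) (cutEdges A₂ B₂) = cutEdges S Sᶜ := by
    ext e
    induction e using Sym2.ind with
    | _ u v =>
      rw [Finset.mem_symmDiff]
      simp only [mem_cutEdges, hcomp₁, hcomp₂, Finset.mem_compl, hSmem u, hSmem v]
      by_cases h1 : u ∈ A₁ <;> by_cases h2 : v ∈ A₁ <;>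
        by_cases h3 : u ∈ A₂ <;> by_cases h4 : v ∈ A₂ <;> simp [h1, h2, h3, h4]
  rw [hedge]
  have hcardcut : (cutEdges S Sᶜ).card = S.card * Sᶜ.card := by
    rw [cutEdges, Finset.card_image_of_injOn, Finset.card_product]
    rintro ⟨a, b⟩ hab ⟨c, d⟩ hcd h
    simp only [Finset.mem_coe, Finset.mem_product] at hab hcd
    simp only [Sym2.eq, Sym2.rel_iff', Prod.mk.injEq, Prod.swap_prod_mk] at h
    rcases h with ⟨rfl, rfl⟩ | ⟨rfl, rfl⟩
    · rfl
    · exact absurd hab.1 (Finset.mem_compl.mp hcd.2)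
  rw [hcardcut]
  have hsum : S.card + Sᶜ.card = n := by
    rw [Finset.card_add_card_compl, hcard]
  obtain ⟨a, ha⟩ := Nat.exists_eq_succ_of_ne_zero (Finset.card_ne_zero_of_mem hSne.choose_spec)
  obtain ⟨b, hb⟩ := Nat.exists_eq_succ_of_ne_zero (Finset.card_ne_zero_of_mem hScne.choose_spec)
  simp only [Nat.succ_eq_add_one] at ha hb
  rw [ha, hb] at hsum ⊢
  have : (a + 1) * (b + 1) = a * b + a + b + 1 := by ring
  omega
end

section
/- Let U be a set of users, T a set of topics, and INT : U → 2^T an interest function such that |INT(u) ∩ INT(v)| ≤ 1 for all distinct u, v ∈ U, and such that each topic is in INT(u) for at least two users u. Then every topic-connected edge set E on U has |E| ≥ Σ_{t∈T} (|U_t| − 1), and this bound is achieved by taking a spanning star on U_t for each topic t (these edge sets are pairwise disjoint). -/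
/-- The set of users interested in topic `t`. -/
def Ut {U T : Type*} [Fintype U] [DecidableEq T] (INT : U → Finset T) (t : T) : Finset U :=
  Finset.univ.filter fun u => t ∈ INT u

/-- An edge set `E` on the users is topic-connected if for every topic `t` the graph
induced by `E` on the users interested in `t` is connected (trivially so when at most
one user is interested). -/
def topicConnected {U T : Type*} [Fintype U] [DecidableEq U] [DecidableEq T]
    (INT : U → Finset T) (E : Finset (Sym2 U)) : Prop :=
  ∀ t : T, ((SimpleGraph.fromEdgeSet (E : Set (Sym2 U))).induce
      ((Ut INT t : Finset U) : Set U)).Preconnected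

/-!
Two topics share at most one user, so no edge joins two users of `U_t` and of `U_{t'}` for
distinct topics `t ≠ t'`. Hence the edges of `E` that lie inside the various `U_t` are
disjoint, and each `U_t` needs at least `|U_t| - 1` of them to be connected. Conversely,
spanning stars on the sets `U_t` are disjoint for the same reason, and their union is
topic-connected.
-/

open Finset SimpleGraph

lemma SimpleGraph.Preconnected.natCard_sub_one_le_natCard_edgeSet {V : Type*}
    {G : SimpleGraph V} (h : G.Preconnected) : Nat.card V - 1 ≤ Nat.card G.edgeSet := by
  rcases isEmpty_or_nonempty V with _ | _
  · simp
  · have := (Connected.mk h).card_vert_le_card_edgeSet_add_one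
    omega

section Sym2OffDiag

variable {U : Type*} [DecidableEq U]

def sym2OffDiag (s : Finset U) : Finset (Sym2 U) := {e ∈ s.sym2 | ¬e.IsDiag}

lemma mk_mem_sym2OffDiag {s : Finset U} {a b : U} :
    s(a, b) ∈ sym2OffDiag s ↔ a ∈ s ∧ b ∈ s ∧ a ≠ b := by
  simp [sym2OffDiag, and_assoc]

lemma disjoint_sym2OffDiag {s s' : Finset U} (h : #(s ∩ s') ≤ 1) :
    Disjoint (sym2OffDiag s) (sym2OffDiag s') := by
  rw [Finset.disjoint_left]
  refine Sym2.ind fun a b hab hab' => ?_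
  rw [mk_mem_sym2OffDiag] at hab hab'
  exact hab.2.2 (card_le_one.mp h a (mem_inter.mpr ⟨hab.1, hab'.1⟩) b
    (mem_inter.mpr ⟨hab.2.1, hab'.2.1⟩))

lemma card_sub_one_le_card_inter_sym2OffDiag {E : Finset (Sym2 U)} {s : Finset U}
    (h : ((fromEdgeSet (E : Set (Sym2 U))).induce (s : Set U)).Preconnected) :
    #s - 1 ≤ #(E ∩ sym2OffDiag s) := by
  set G := (fromEdgeSet (E : Set (Sym2 U))).induce (s : Set U)
  have hmaps : Sym2.map Subtype.val '' G.edgeSet ⊆ ↑(E ∩ sym2OffDiag s) := by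
    rintro _ ⟨e, he, rfl⟩
    induction e using Sym2.ind with
    | _ a b =>
      simp only [G, mem_edgeSet, comap_adj, Function.Embedding.coe_subtype,
        fromEdgeSet_adj] at he
      simp [mk_mem_sym2OffDiag, he.1, he.2]
  calc #s - 1 = Nat.card (s : Set U) - 1 := by simp
    _ ≤ Nat.card G.edgeSet := h.natCard_sub_one_le_natCard_edgeSet
    _ = (Sym2.map Subtype.val '' G.edgeSet).ncard := by
      rw [Set.ncard_image_of_injective _ (Sym2.map.injective Subtype.val_injective),
        Nat.card_coe_set_eq]
    _ ≤ #(E ∩ sym2OffDiag s) := (Set.ncard_le_ncard hmaps).trans_eq (Set.ncard_coe_finset _)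

def spanningStar (c : U) (s : Finset U) : Finset (Sym2 U) := (s.erase c).image (s(c, ·))

lemma spanningStar_subset_sym2OffDiag {c : U} {s : Finset U} (hc : c ∈ s) :
    spanningStar c s ⊆ sym2OffDiag s := by
  intro e he
  obtain ⟨v, hv, rfl⟩ := mem_image.mp he
  obtain ⟨hvc, hvs⟩ := mem_erase.mp hv
  exact mk_mem_sym2OffDiag.mpr ⟨hc, hvs, Ne.symm hvc⟩

lemma card_spanningStar {c : U} {s : Finset U} (hc : c ∈ s) :
    #(spanningStar c s) = #s - 1 := by
  rw [spanningStar, card_image_of_injective _ fun _ _ => Sym2.congr_right.mp,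
    card_erase_of_mem hc]

lemma preconnected_induce_of_spanningStar_subset {c : U} {s : Finset U} {E : Finset (Sym2 U)}
    (hc : c ∈ s) (h : spanningStar c s ⊆ E) :
    ((fromEdgeSet (E : Set (Sym2 U))).induce (s : Set U)).Preconnected := by
  have hreach : ∀ v : (s : Set U),
      ((fromEdgeSet (E : Set (Sym2 U))).induce (s : Set U)).Reachable v ⟨c, hc⟩ := by
    rintro ⟨v, hv⟩
    by_cases hvc : v = c
    · subst hvc; rfl
    · refine Adj.reachable ?_
      simp only [comap_adj, Function.Embedding.coe_subtype, fromEdgeSet_adj, ne_eq, hvc,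
        not_false_eq_true, and_true]
      rw [Sym2.eq_swap]
      exact_mod_cast h (mem_image_of_mem _ (mem_erase.mpr ⟨hvc, hv⟩))
  exact fun u v => (hreach u).trans (hreach v).symm

lemma exists_subset_sym2OffDiag_preconnected (s : Finset U) :
    ∃ F ⊆ sym2OffDiag s, #F = #s - 1 ∧ ∀ E : Finset (Sym2 U), F ⊆ E →
      ((fromEdgeSet (E : Set (Sym2 U))).induce (s : Set U)).Preconnected := by
  rcases s.eq_empty_or_nonempty with rfl | ⟨c, hc⟩
  · refine ⟨∅, empty_subset _, rfl, fun E _ => ?_⟩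
    have : Subsingleton ((∅ : Finset U) : Set U) := by simp
    exact Preconnected.of_subsingleton
  · exact ⟨spanningStar c s, spanningStar_subset_sym2OffDiag hc, card_spanningStar hc,
      fun E => preconnected_induce_of_spanningStar_subset hc⟩

end Sym2OffDiag

lemma card_Ut_inter_Ut_le_one {U T : Type*} [Fintype U] [DecidableEq U] [DecidableEq T]
    {INT : U → Finset T}
    (h1 : ∀ u v : U, u ≠ v → #(INT u ∩ INT v) ≤ 1) {t t' : T} (htt' : t ≠ t') :
    #(Ut INT t ∩ Ut INT t') ≤ 1 := by
  refine card_le_one.mpr fun u hu v hv => ?_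
  simp only [Ut, mem_inter, mem_filter, mem_univ, true_and] at hu hv
  by_contra huv
  exact htt' (card_le_one.mp (h1 u v huv) t (mem_inter.mpr ⟨hu.1, hv.1⟩) t'
    (mem_inter.mpr ⟨hu.2, hv.2⟩))

theorem topicConnected_lower_bound_general {U T : Type*} [Fintype U] [Fintype T]
    [DecidableEq U] [DecidableEq T] (INT : U → Finset T)
    (h1 : ∀ u v : U, u ≠ v → (INT u ∩ INT v).card ≤ 1) :
    (∀ E : Finset (Sym2 U), topicConnected INT E →
        ∑ t : T, ((Ut INT t).card - 1) ≤ E.card) ∧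
    (∃ E : Finset (Sym2 U), topicConnected INT E ∧
        E.card = ∑ t : T, ((Ut INT t).card - 1)) := by
  have hdisj : ((univ : Finset T) : Set T).PairwiseDisjoint fun t => sym2OffDiag (Ut INT t) :=
    fun t _ t' _ htt' => disjoint_sym2OffDiag (card_Ut_inter_Ut_le_one h1 htt')
  constructor
  · intro E hE
    calc ∑ t, (#(Ut INT t) - 1) ≤ ∑ t, #(E ∩ sym2OffDiag (Ut INT t)) :=
          sum_le_sum fun t _ => card_sub_one_le_card_inter_sym2OffDiag (hE t)
      _ = #(univ.biUnion fun t => E ∩ sym2OffDiag (Ut INT t)) :=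
          (card_biUnion (hdisj.mono fun _ => inter_subset_right)).symm
      _ ≤ #E := card_le_card (biUnion_subset.mpr fun _ _ => inter_subset_left)
  · choose F hFsub hFcard hFconn using
      fun t => exists_subset_sym2OffDiag_preconnected (Ut INT t)
    refine ⟨univ.biUnion F, fun t => hFconn t _ (subset_biUnion_of_mem F (mem_univ t)), ?_⟩
    rw [card_biUnion (hdisj.mono hFsub)]
    exact sum_congr rfl fun t _ => hFcard t

/-- If `|INT(u) ∩ INT(v)| ≤ 1` for all distinct users and each topic interests at least
two users, then every topic-connected edge set has at least `Σ_t (|U_t| − 1)` edges, and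
this bound is achieved. -/
theorem topicConnected_lower_bound {U T : Type*} [Fintype U] [Fintype T]
    [DecidableEq U] [DecidableEq T] (INT : U → Finset T)
    (h1 : ∀ u v : U, u ≠ v → (INT u ∩ INT v).card ≤ 1)
    (h2 : ∀ t : T, 2 ≤ (Ut INT t).card) :
    (∀ E : Finset (Sym2 U), topicConnected INT E →
        ∑ t : T, ((Ut INT t).card - 1) ≤ E.card) ∧
    (∃ E : Finset (Sym2 U), topicConnected INT E ∧
        E.card = ∑ t : T, ((Ut INT t).card - 1)) :=
  topicConnected_lower_bound_general INT h1
end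

section
/- In the reduction from the previous context (two copies V^(1), V^(2) of V' with topics t_e^(0), t_e^(1), t_e^(2)), if W ⊆ V' is a vertex cover of G = (V',E'), then the edge set H = {{u^(1),v^(1)}, {u^(2),v^(2)} : {u,v} ∈ E'} ∪ {{u^(1),u^(2)} : u ∈ W} is a topic-connected edge set of size 2|E'| + |W|. -/
open SimpleGraph




/-- The users interested in topic `t_e^(i)`. -/
def interested {V' : Type*} [Fintype V'] [DecidableEq V'] (e : Sym2 V') (i : Fin 3) :
    Finset (V' × Bool) :=
  Finset.univ.filter fun x =>
    x.1 ∈ e ∧ (i = 0 ∨ (i = 1 ∧ x.2 = false) ∨ (i = 2 ∧ x.2 = true))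

/-- Topic-connectedness for the Min-TCO instance constructed from a graph `G`. -/
def tcVC {V' : Type*} [Fintype V'] [DecidableEq V'] (G : SimpleGraph V')
    [DecidableRel G.Adj] (H : Finset (Sym2 (V' × Bool))) : Prop :=
  ∀ e ∈ G.edgeFinset, ∀ i : Fin 3,
    ((SimpleGraph.fromEdgeSet (H : Set (Sym2 (V' × Bool)))).induce
      ((interested e i : Finset (V' × Bool)) : Set (V' × Bool))).Preconnected



section Aux
variable {V' : Type*} [Fintype V'] [DecidableEq V']

lemma mem_interested_iff (e : Sym2 V') (i : Fin 3) (x : V' × Bool) :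
    x ∈ interested e i ↔
      x.1 ∈ e ∧ (i = 0 ∨ (i = 1 ∧ x.2 = false) ∨ (i = 2 ∧ x.2 = true)) := by
  simp [interested]

omit [Fintype V'] [DecidableEq V'] in
lemma induce_adj_of (H : Finset (Sym2 (V' × Bool))) (S : Set (V' × Bool))
    (a b : S) (h : s((a : V' × Bool), (b : V' × Bool)) ∈ H)
    (hne : (a : V' × Bool) ≠ b) :
    ((SimpleGraph.fromEdgeSet (H : Set (Sym2 (V' × Bool)))).induce S).Adj a b := by
  simp only [induce, comap_adj, Function.Embedding.coe_subtype, fromEdgeSet_adj]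
  exact ⟨h, hne⟩

lemma pre_of (H : Finset (Sym2 (V' × Bool))) (u v : V') (huv : u ≠ v)
    (h1 : s((u, false), (v, false)) ∈ H) (h2 : s((u, true), (v, true)) ∈ H)
    (i : Fin 3) (h0 : i = 0 → s((u, false), (u, true)) ∈ H) :
    ((SimpleGraph.fromEdgeSet (H : Set (Sym2 (V' × Bool)))).induce
      ((interested s(u, v) i : Finset (V' × Bool)) : Set (V' × Bool))).Preconnected := by
  set S := ((interested s(u, v) i : Finset (V' × Bool)) : Set (V' × Bool)) with hS
  have hmem : ∀ x : V' × Bool, x ∈ S ↔ (x.1 = u ∨ x.1 = v) ∧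
      (i = 0 ∨ (i = 1 ∧ x.2 = false) ∨ (i = 2 ∧ x.2 = true)) := by
    intro x
    rw [hS, Finset.mem_coe, mem_interested_iff, Sym2.mem_iff]
  fin_cases i
  · -- i = 0 : all four vertices
    have hb0 : (u, false) ∈ S := by rw [hmem]; simp
    have hb1 : (u, true) ∈ S := by rw [hmem]; simp
    have hc0 : (v, false) ∈ S := by rw [hmem]; simp
    have hc1 : (v, true) ∈ S := by rw [hmem]; simp
    have hvert := h0 rfl
    set G' := (SimpleGraph.fromEdgeSet (H : Set (Sym2 (V' × Bool)))).induce S with hG'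
    have r1 : G'.Reachable ⟨(u, false), hb0⟩ ⟨(v, false), hc0⟩ :=
      (induce_adj_of H S _ _ h1 (by simp [huv])).reachable
    have r2 : G'.Reachable ⟨(u, false), hb0⟩ ⟨(u, true), hb1⟩ :=
      (induce_adj_of H S _ _ hvert (by simp)).reachable
    have r3 : G'.Reachable ⟨(u, true), hb1⟩ ⟨(v, true), hc1⟩ :=
      (induce_adj_of H S _ _ h2 (by simp [huv])).reachable
    have reach : ∀ x : S, G'.Reachable ⟨(u, false), hb0⟩ x := by
      rintro ⟨x, hx⟩
      have hx' := (hmem x).mp hx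
      obtain ⟨h1', -⟩ := hx'
      obtain ⟨x1, x2⟩ := x
      dsimp only at h1'
      rcases h1' with rfl | rfl <;> rcases x2 with _ | _
      · exact Reachable.refl _
      · exact r2
      · exact r1
      · exact r2.trans r3
    exact fun a b => (reach a).symm.trans (reach b)
  · -- i = 1 : the two false vertices
    have hb0 : (u, false) ∈ S := by rw [hmem]; simp
    have hc0 : (v, false) ∈ S := by rw [hmem]; simp
    set G' := (SimpleGraph.fromEdgeSet (H : Set (Sym2 (V' × Bool)))).induce S with hG'
    have r1 : G'.Reachable ⟨(u, false), hb0⟩ ⟨(v, false), hc0⟩ :=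
      (induce_adj_of H S _ _ h1 (by simp [huv])).reachable
    have reach : ∀ x : S, G'.Reachable ⟨(u, false), hb0⟩ x := by
      rintro ⟨x, hx⟩
      have hx' := (hmem x).mp hx
      obtain ⟨h1', h2'⟩ := hx'
      obtain ⟨x1, x2⟩ := x
      dsimp only at h1' h2'
      simp only [Fin.ext_iff] at h2'
      norm_num at h2'
      subst h2'
      rcases h1' with rfl | rfl
      · exact Reachable.refl _
      · exact r1
    exact fun a b => (reach a).symm.trans (reach b)
  · -- i = 2 : the two true vertices
    have hb1 : (u, true) ∈ S := by rw [hmem]; simp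
    have hc1 : (v, true) ∈ S := by rw [hmem]; simp
    set G' := (SimpleGraph.fromEdgeSet (H : Set (Sym2 (V' × Bool)))).induce S with hG'
    have r1 : G'.Reachable ⟨(u, true), hb1⟩ ⟨(v, true), hc1⟩ :=
      (induce_adj_of H S _ _ h2 (by simp [huv])).reachable
    have reach : ∀ x : S, G'.Reachable ⟨(u, true), hb1⟩ x := by
      rintro ⟨x, hx⟩
      have hx' := (hmem x).mp hx
      obtain ⟨h1', h2'⟩ := hx'
      obtain ⟨x1, x2⟩ := x
      dsimp only at h1' h2'
      simp only [Fin.ext_iff] at h2'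
      norm_num at h2'
      subst h2'
      rcases h1' with rfl | rfl
      · exact Reachable.refl _
      · exact r1
    exact fun a b => (reach a).symm.trans (reach b)

end Aux

/-- If `W` is a vertex cover of `G`, then the edge set consisting of both horizontal
copies of every edge of `G` together with the vertical edges `{u⁽¹⁾,u⁽²⁾}` for `u ∈ W`
is a topic-connected edge set of size `2|E'| + |W|`. -/
theorem vertex_cover_gives_overlay {V' : Type*} [Fintype V'] [DecidableEq V']
    (G : SimpleGraph V') [DecidableRel G.Adj] (W : Finset V')
    (hW : ∀ u v : V', G.Adj u v → u ∈ W ∨ v ∈ W) :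
    tcVC G
        (G.edgeFinset.image (Sym2.map fun x => (x, false)) ∪
          G.edgeFinset.image (Sym2.map fun x => (x, true)) ∪
          W.image fun u => s((u, false), (u, true))) ∧
    (G.edgeFinset.image (Sym2.map fun x => (x, false)) ∪
        G.edgeFinset.image (Sym2.map fun x => (x, true)) ∪
        W.image fun u => s((u, false), (u, true))).card
      = 2 * G.edgeFinset.card + W.card := by
  set H : Finset (Sym2 (V' × Bool)) :=
    G.edgeFinset.image (Sym2.map fun x => (x, false)) ∪
      G.edgeFinset.image (Sym2.map fun x => (x, true)) ∪
      W.image fun u => s((u, false), (u, true)) with hH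
  have hfalse : ∀ {u v : V'}, G.Adj u v → s((u, false), (v, false)) ∈ H := by
    intro u v h
    refine Finset.mem_union_left _ (Finset.mem_union_left _ ?_)
    exact Finset.mem_image.mpr ⟨s(u, v), by simpa using h, Sym2.map_pair_eq _ _ _⟩
  have htrue : ∀ {u v : V'}, G.Adj u v → s((u, true), (v, true)) ∈ H := by
    intro u v h
    refine Finset.mem_union_left _ (Finset.mem_union_right _ ?_)
    exact Finset.mem_image.mpr ⟨s(u, v), by simpa using h, Sym2.map_pair_eq _ _ _⟩
  have hvert : ∀ {u : V'}, u ∈ W → s((u, false), (u, true)) ∈ H := by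
    intro u h
    exact Finset.mem_union_right _ (Finset.mem_image.mpr ⟨u, h, rfl⟩)
  constructor
  · intro e he i
    induction e using Sym2.ind with
    | _ u v =>
      have hadj : G.Adj u v := by simpa using he
      rcases hW u v hadj with hu | hv
      · exact pre_of H u v hadj.ne (hfalse hadj) (htrue hadj) i (fun _ => hvert hu)
      · rw [Sym2.eq_swap]
        exact pre_of H v u hadj.ne' (hfalse hadj.symm) (htrue hadj.symm) i
          (fun _ => hvert hv)
  · -- cardinality
    have hinjf : Function.Injective (fun x : V' => (x, false)) := fun a b h => by
      simpa using h
    have hinjt : Function.Injective (fun x : V' => (x, true)) := fun a b h => by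
      simpa using h
    have hinjW : Function.Injective (fun u : V' => s((u, false), (u, true))) := by
      intro a b h
      rw [Sym2.eq_iff] at h
      rcases h with ⟨h1, -⟩ | ⟨h1, -⟩ <;> simpa using congrArg Prod.fst h1
    have hd1 : Disjoint (G.edgeFinset.image (Sym2.map fun x => (x, false)))
        (G.edgeFinset.image (Sym2.map fun x => (x, true))) := by
      rw [Finset.disjoint_left]
      intro a h1 h2
      obtain ⟨e1, -, rfl⟩ := Finset.mem_image.mp h1
      obtain ⟨e2, -, he⟩ := Finset.mem_image.mp h2
      induction e1 using Sym2.ind with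
      | _ a b =>
        induction e2 using Sym2.ind with
        | _ c d =>
          simp only [Sym2.map_pair_eq, Sym2.eq_iff, Prod.mk.injEq] at he
          tauto
    have hd2 : Disjoint (G.edgeFinset.image (Sym2.map fun x => (x, false)) ∪
        G.edgeFinset.image (Sym2.map fun x => (x, true)))
        (W.image fun u => s((u, false), (u, true))) := by
      rw [Finset.disjoint_left]
      intro a h1 h2
      obtain ⟨u, -, rfl⟩ := Finset.mem_image.mp h2
      rcases Finset.mem_union.mp h1 with h1 | h1 <;>
        obtain ⟨e1, -, he⟩ := Finset.mem_image.mp h1 <;>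
        · induction e1 using Sym2.ind with
          | _ a b =>
            simp only [Sym2.map_pair_eq, Sym2.eq_iff, Prod.mk.injEq] at he
            tauto
    rw [hH, Finset.card_union_of_disjoint hd2, Finset.card_union_of_disjoint hd1,
      Finset.card_image_of_injective _ (Sym2.map.injective hinjf),
      Finset.card_image_of_injective _ (Sym2.map.injective hinjt),
      Finset.card_image_of_injective _ hinjW]
    ring
end

section
/- In the vertex-cover-to-TCO reduction, from any topic-connected edge set H one can extract a vertex cover of G = (V',E') of size at most |H| − 2|E'|: namely, after replacing any 'cross' edge {u^(1),v^(2)} or {v^(1),u^(2)} used for topic t_e^(0) by a 'vertical' edge {u^(1),u^(2)} or {v^(1),v^(2)}, the set W = {u ∈ V' : {u^(1),u^(2)} ∈ H} is a vertex cover, and |W| ≤ |H| − 2|E'|. -/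
lemma eq_of_reachable' {α β : Type*} (Gr : SimpleGraph α) (f : α → β)
    (hf : ∀ a b, Gr.Adj a b → f a = f b) {a b : α} (h : Gr.Reachable a b) : f a = f b := by
  obtain ⟨w⟩ := h
  induction w with
  | nil => rfl
  | cons hadj _ ih => exact (hf _ _ hadj).trans ih

lemma exists_adj_of_reachable' {α : Type*} {Gr : SimpleGraph α} {a b : α}
    (h : Gr.Reachable a b) (hne : a ≠ b) : ∃ c, Gr.Adj a c := by
  obtain ⟨w⟩ := h
  cases w with
  | nil => exact absurd rfl hne
  | cons h' _ => exact ⟨_, h'⟩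

lemma adj_of_pair {α : Type*} (Gr : SimpleGraph α) (s : Set α)
    (hp : (Gr.induce s).Preconnected) {a b : α} (ha : a ∈ s) (hb : b ∈ s) (hab : a ≠ b)
    (hsub : ∀ x ∈ s, x = a ∨ x = b) : Gr.Adj a b := by
  obtain ⟨c, hac⟩ := exists_adj_of_reachable' (hp ⟨a, ha⟩ ⟨b, hb⟩)
    (by simp [Subtype.ext_iff, hab])
  have hac' : Gr.Adj a (c : α) := hac
  have hc : (c : α) = a ∨ (c : α) = b := hsub _ c.2
  rcases hc with h | h
  · exact absurd h hac'.ne'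
  · rw [← h]; exact hac'

lemma horiz_mem {V' : Type*} [Fintype V'] [DecidableEq V'] (G : SimpleGraph V')
    [DecidableRel G.Adj] (H : Finset (Sym2 (V' × Bool))) (hH : tcVC G H)
    {e : Sym2 V'} (he : e ∈ G.edgeFinset) (c : Bool) :
    Sym2.map (fun u => (u, c)) e ∈ H := by
  induction e with
  | _ u v =>
  have hadj : G.Adj u v := by rwa [SimpleGraph.mem_edgeFinset, SimpleGraph.mem_edgeSet] at he
  have hne : u ≠ v := hadj.ne
  have key : (SimpleGraph.fromEdgeSet (H : Set (Sym2 (V' × Bool)))).Adj (u, c) (v, c) := by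
    apply adj_of_pair _ _ (hH _ he (if c then 2 else 1))
    · cases c <;> simp [interested]
    · cases c <;> simp [interested]
    · simp [hne]
    · intro x hx
      simp only [Finset.coe_filter, interested, Set.mem_setOf_eq, Finset.mem_filter,
        Finset.mem_univ, true_and, Sym2.mem_iff] at hx
      cases c <;> simp_all <;> rcases hx.1 with h | h <;>
        [left; right; left; right] <;> exact Prod.ext h hx.2
  rw [SimpleGraph.fromEdgeSet_adj] at key
  rw [Sym2.map_pair_eq]
  exact key.1

lemma extra_ex {V' : Type*} [Fintype V'] [DecidableEq V'] (G : SimpleGraph V')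
    [DecidableRel G.Adj] (H : Finset (Sym2 (V' × Bool))) (hH : tcVC G H)
    {e : Sym2 V'} (he : e ∈ G.edgeFinset) :
    ∃ h ∈ H, ¬ (Sym2.map Prod.snd h).IsDiag ∧ (∀ y ∈ h, y.1 ∈ e) ∧
      ∃ x : V', (x, false) ∈ h := by
  induction e with
  | _ u v =>
  have hadj : G.Adj u v := by rwa [SimpleGraph.mem_edgeFinset, SimpleGraph.mem_edgeSet] at he
  have hconn := hH _ he 0
  set S : Set (V' × Bool) := ((interested s(u,v) 0 : Finset (V' × Bool)) : Set (V' × Bool)) with hS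
  have hmemS : ∀ x : V' × Bool, x ∈ S ↔ x.1 = u ∨ x.1 = v := by
    intro x
    simp [hS, interested, Sym2.mem_iff]
  have huf : ((u, false) : V' × Bool) ∈ S := by simp [hmemS]
  have hut : ((u, true) : V' × Bool) ∈ S := by simp [hmemS]
  have hnall : ¬ ∀ a b : S, ((SimpleGraph.fromEdgeSet (H : Set (Sym2 (V' × Bool)))).induce S).Adj a b
      → (a : V' × Bool).2 = (b : V' × Bool).2 := by
    intro hall
    have := eq_of_reachable' _ (fun x : S => (x : V' × Bool).2) hall
      (hconn ⟨(u, false), huf⟩ ⟨(u, true), hut⟩)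
    simp at this
  push_neg at hnall
  obtain ⟨a, b, hab, hsnd⟩ := hnall
  have hab' : (SimpleGraph.fromEdgeSet (H : Set (Sym2 (V' × Bool)))).Adj (a : V' × Bool) (b : V' × Bool) := hab
  rw [SimpleGraph.fromEdgeSet_adj] at hab'
  refine ⟨s((a : V' × Bool), (b : V' × Bool)), hab'.1, ?_, ?_, ?_⟩
  · rw [Sym2.map_pair_eq, Sym2.mk_isDiag_iff]
    exact hsnd
  · intro y hy
    rw [Sym2.mem_iff] at hy
    rcases hy with rfl | rfl
    · rw [Sym2.mem_iff]; exact (hmemS _).mp a.2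
    · rw [Sym2.mem_iff]; exact (hmemS _).mp b.2
  · rcases Bool.eq_false_or_eq_true (a : V' × Bool).2 with h | h
    · have hb : (b : V' × Bool).2 = false := by
        cases hb' : (b : V' × Bool).2
        · rfl
        · exact absurd (h.trans hb'.symm) hsnd
      exact ⟨(b : V' × Bool).1, by rw [Sym2.mem_iff]; right; rw [← hb]⟩
    · exact ⟨(a : V' × Bool).1, by rw [Sym2.mem_iff]; left; rw [← h]⟩

/-- From any topic-connected edge set `H` of the instance constructed from `G` one can
extract a vertex cover of `G` of size at most `|H| − 2|E'|`. -/
theorem overlay_gives_vertex_cover {V' : Type*} [Fintype V'] [DecidableEq V']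
    (G : SimpleGraph V') [DecidableRel G.Adj] (H : Finset (Sym2 (V' × Bool)))
    (hH : tcVC G H) :
    ∃ W : Finset V', (∀ u v : V', G.Adj u v → u ∈ W ∨ v ∈ W) ∧
      W.card + 2 * G.edgeFinset.card ≤ H.card := by
  classical
  by_cases hE : G.edgeFinset = ∅
  · refine ⟨∅, fun u v huv => absurd ?_ (by simp [hE] : s(u,v) ∉ G.edgeFinset), by simp [hE]⟩
    rw [SimpleGraph.mem_edgeFinset, SimpleGraph.mem_edgeSet]; exact huv
  · obtain ⟨e0, he0⟩ := Finset.nonempty_iff_ne_empty.mpr hE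
    have : Nonempty V' := ⟨(Quot.out e0).1⟩
    have hInh : Inhabited V' := Classical.inhabited_of_nonempty this
    -- definitions
    set A : Finset (Sym2 (V' × Bool)) :=
      G.edgeFinset.image (Sym2.map (fun u => (u, false))) ∪
      G.edgeFinset.image (Sym2.map (fun u => (u, true))) with hA
    set extra : Sym2 V' → Sym2 (V' × Bool) := fun e =>
      if hp : e ∈ G.edgeFinset then (extra_ex G H hH hp).choose
      else Sym2.map (fun u => (u, false)) e with hextra
    set pickOf : Sym2 (V' × Bool) → V' := fun h =>
      if hx : ∃ x : V', (x, false) ∈ h then hx.choose else default with hpickOf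
    refine ⟨G.edgeFinset.image (fun e => pickOf (extra e)), ?_, ?_⟩
    · -- vertex cover
      intro u v huv
      have he : s(u,v) ∈ G.edgeFinset := by
        rw [SimpleGraph.mem_edgeFinset, SimpleGraph.mem_edgeSet]; exact huv
      obtain ⟨hmem, hdiag, hfst, hx⟩ := (extra_ex G H hH he).choose_spec
      have hext : extra s(u,v) = (extra_ex G H hH he).choose := dif_pos he
      have hx' : ∃ x : V', (x, false) ∈ extra s(u,v) := by rw [hext]; exact hx
      have hpick : pickOf (extra s(u,v)) = hx'.choose := dif_pos hx'
      have hmem2 : (hx'.choose, false) ∈ extra s(u,v) := hx'.choose_spec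
      have hfst' : ∀ y ∈ extra s(u,v), y.1 ∈ s(u,v) := by rw [hext]; exact hfst
      have := hfst' _ hmem2
      rw [Sym2.mem_iff] at this
      rcases this with h | h
      · left; exact Finset.mem_image.mpr ⟨s(u,v), he, hpick.trans h⟩
      · right; exact Finset.mem_image.mpr ⟨s(u,v), he, hpick.trans h⟩
    · -- cardinality
      have hAsub : A ⊆ H := by
        rw [hA]
        apply Finset.union_subset <;> rw [Finset.image_subset_iff] <;>
          intro e he <;> exact horiz_mem G H hH he _
      have hAdiag : ∀ h ∈ A, (Sym2.map Prod.snd h).IsDiag := by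
        intro h hh
        rw [hA, Finset.mem_union] at hh
        rcases hh with hh | hh <;> rw [Finset.mem_image] at hh <;>
          obtain ⟨e, he, rfl⟩ := hh <;> induction e using Sym2.ind with
          | _ p q => rw [Sym2.map_map, Sym2.map_pair_eq]; exact rfl
      have himg : G.edgeFinset.image extra ⊆ H \ A := by
        intro h hh
        rw [Finset.mem_image] at hh
        obtain ⟨e, he, rfl⟩ := hh
        obtain ⟨hmem, hdiag, -, -⟩ := (extra_ex G H hH he).choose_spec
        have hext : extra e = (extra_ex G H hH he).choose := dif_pos he
        rw [Finset.mem_sdiff, hext]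
        exact ⟨hmem, fun hin => hdiag (hAdiag _ hin)⟩
      have hAcard : A.card = 2 * G.edgeFinset.card := by
        rw [hA, Finset.card_union_of_disjoint, Finset.card_image_of_injective _
          (Sym2.map.injective (fun a b h => (Prod.mk.injEq _ _ _ _).mp h |>.1)),
          Finset.card_image_of_injective _
          (Sym2.map.injective (fun a b h => (Prod.mk.injEq _ _ _ _).mp h |>.1)), two_mul]
        rw [Finset.disjoint_left]
        intro h h1 h2
        rw [Finset.mem_image] at h1 h2
        obtain ⟨e, he, rfl⟩ := h1
        obtain ⟨e', he', heq⟩ := h2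
        induction e using Sym2.ind with
        | _ p q =>
          have : ((p, false) : V' × Bool) ∈ Sym2.map (fun u => (u, true)) e' := by
            rw [heq, Sym2.map_pair_eq]; exact Sym2.mem_mk_left _ _
          rw [Sym2.mem_map] at this
          obtain ⟨x, -, hx⟩ := this
          exact Bool.noConfusion ((Prod.mk.injEq _ _ _ _).mp hx).2
      have hWle : (G.edgeFinset.image (fun e => pickOf (extra e))).card ≤
          (G.edgeFinset.image extra).card := by
        have himgi : (G.edgeFinset.image extra).image pickOf =
            G.edgeFinset.image (fun e => pickOf (extra e)) := by
          rw [Finset.image_image]; rfl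
        rw [← himgi]
        exact Finset.card_image_le
      have h1 : (G.edgeFinset.image extra).card ≤ (H \ A).card := Finset.card_le_card himg
      have h2 : (H \ A).card = H.card - A.card := Finset.card_sdiff_of_subset hAsub
      have h3 : A.card ≤ H.card := Finset.card_le_card hAsub
      omega
end

section
/- The graph G = (V',E') has a minimum vertex cover of size k if and only if the Min-TCO instance constructed from G (two copies of V' and topics t_e^(0), t_e^(1), t_e^(2) per edge e) has a minimum topic-connected edge set of size k + 2|E'|. -/
open Finset SimpleGraph

section Aux

variable {V' : Type*} [Fintype V'] [DecidableEq V']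

lemma aux_mem_interested0 {e : Sym2 V'} {x : V' × Bool} :
    x ∈ interested e 0 ↔ x.1 ∈ e := by
  simp [interested]

lemma aux_mem_interested1 {e : Sym2 V'} {x : V' × Bool} :
    x ∈ interested e 1 ↔ x.1 ∈ e ∧ x.2 = false := by
  simp [interested, Fin.ext_iff]

lemma aux_mem_interested2 {e : Sym2 V'} {x : V' × Bool} :
    x ∈ interested e 2 ↔ x.1 ∈ e ∧ x.2 = true := by
  simp [interested, Fin.ext_iff]

/-- first step of a walk between vertices with different labels. -/
lemma aux_exists_adj_label {α : Type*} {G : SimpleGraph α} (f : α → Bool) :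
    ∀ {x y : α}, G.Walk x y → f x ≠ f y → ∃ a b, G.Adj a b ∧ f a ≠ f b := by
  intro x y w
  induction w with
  | nil => intro h; exact absurd rfl h
  | @cons u v z h p ih =>
    intro hxz
    by_cases hfe : f u = f v
    · exact ih (fun hc => hxz (hfe.trans hc))
    · exact ⟨u, v, h, hfe⟩

lemma aux_exists_adj {α : Type*} {G : SimpleGraph α} {x y : α}
    (h : G.Reachable x y) (hxy : x ≠ y) : ∃ a b, G.Adj a b := by
  obtain ⟨w⟩ := h
  cases w with
  | nil => exact absurd rfl hxy
  | cons h p => exact ⟨_, _, h⟩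

end Aux

section Main

variable {V' : Type*} [Fintype V'] [DecidableEq V'] (G : SimpleGraph V') [DecidableRel G.Adj]

/-- the forced "level" edges belong to any topic-connected edge set. -/
lemma aux_forced_mem {H : Finset (Sym2 (V' × Bool))} (hH : tcVC G H)
    {e : Sym2 V'} (he : e ∈ G.edgeFinset) (b : Bool) :
    Sym2.map (fun v => (v, b)) e ∈ H := by
  induction e using Sym2.ind with
  | _ u v =>
  have hadj : G.Adj u v := by rwa [mem_edgeFinset, mem_edgeSet] at he
  have hne : u ≠ v := hadj.ne
  set i : Fin 3 := if b then 2 else 1 with hi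
  have hmem : ∀ x : V' × Bool, x ∈ interested s(u,v) i ↔ x.1 ∈ s(u,v) ∧ x.2 = b := by
    intro x
    cases b <;> simp [hi, aux_mem_interested1, aux_mem_interested2]
  have hu : ((u, b) : V' × Bool) ∈ (interested s(u,v) i : Set (V' × Bool)) := by
    simp [hmem]
  have hv : ((v, b) : V' × Bool) ∈ (interested s(u,v) i : Set (V' × Bool)) := by
    simp [hmem]
  have hreach := hH s(u,v) he i ⟨(u,b), hu⟩ ⟨(v,b), hv⟩
  have hxy : (⟨(u,b), hu⟩ : (interested s(u,v) i : Set (V' × Bool))) ≠ ⟨(v,b), hv⟩ := by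
    simp [hne]
  obtain ⟨a, c, hac⟩ := aux_exists_adj hreach hxy
  rw [comap_adj, fromEdgeSet_adj] at hac
  obtain ⟨hacH, hacne⟩ := hac
  have ha := (hmem _).1 (Finset.mem_coe.1 a.2)
  have hc := (hmem _).1 (Finset.mem_coe.1 c.2)
  have key : s((a : V' × Bool), (c : V' × Bool)) = s((u,b),(v,b)) := by
    have ha1 : (a : V' × Bool) = (u, b) ∨ (a : V' × Bool) = (v, b) := by
      rcases Sym2.mem_iff.1 ha.1 with h | h
      · exact Or.inl (Prod.ext h ha.2)
      · exact Or.inr (Prod.ext h ha.2)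
    have hc1 : (c : V' × Bool) = (u, b) ∨ (c : V' × Bool) = (v, b) := by
      rcases Sym2.mem_iff.1 hc.1 with h | h
      · exact Or.inl (Prod.ext h hc.2)
      · exact Or.inr (Prod.ext h hc.2)
    rcases ha1 with h1 | h1 <;> rcases hc1 with h2 | h2
    · exact absurd (h1.trans h2.symm) hacne
    · rw [h1, h2]
    · rw [h1, h2, Sym2.eq_swap]
    · exact absurd (h1.trans h2.symm) hacne
  rw [Sym2.map_pair_eq, ← key]
  exact hacH

/-- every topic-connected edge set contains, for each graph edge, a "mixed" edge
inside the corresponding topic-0 set. -/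
lemma aux_mixed_mem {H : Finset (Sym2 (V' × Bool))} (hH : tcVC G H)
    {e : Sym2 V'} (he : e ∈ G.edgeFinset) :
    ∃ ε ∈ H, ¬ (Sym2.map Prod.snd ε).IsDiag ∧ ∀ x ∈ ε, x ∈ interested e 0 := by
  induction e using Sym2.ind with
  | _ u v =>
  have hu : ((u, false) : V' × Bool) ∈ (interested s(u,v) 0 : Set (V' × Bool)) := by
    simp [aux_mem_interested0]
  have hu' : ((u, true) : V' × Bool) ∈ (interested s(u,v) 0 : Set (V' × Bool)) := by
    simp [aux_mem_interested0]
  have hreach := hH s(u,v) he 0 ⟨(u,false), hu⟩ ⟨(u,true), hu'⟩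
  obtain ⟨w⟩ := hreach
  obtain ⟨a, c, hac, hlab⟩ := aux_exists_adj_label
    (fun x : (interested s(u,v) 0 : Set (V' × Bool)) => (x : V' × Bool).2) w (by simp)
  rw [comap_adj, fromEdgeSet_adj] at hac
  refine ⟨s((a : V' × Bool), (c : V' × Bool)), hac.1, ?_, ?_⟩
  · rw [Sym2.map_pair_eq]
    simpa using hlab
  · intro x hx
    rcases Sym2.mem_iff.1 hx with rfl | rfl
    · exact Finset.mem_coe.1 a.2
    · exact Finset.mem_coe.1 c.2

/-- The constructed topic-connected edge set from a vertex cover. -/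
def buildH (W : Finset V') : Finset (Sym2 (V' × Bool)) :=
  (G.edgeFinset.image (Sym2.map (fun v => (v, false))) ∪
    G.edgeFinset.image (Sym2.map (fun v => (v, true)))) ∪
    W.image (fun w => s((w, false), (w, true)))

lemma aux_snd_of_mem_image {b : Bool} {ε : Sym2 (V' × Bool)}
    (h : ε ∈ G.edgeFinset.image (Sym2.map (fun v => (v, b)))) :
    Sym2.map Prod.snd ε = s(b, b) := by
  obtain ⟨e, _, rfl⟩ := Finset.mem_image.1 h
  induction e using Sym2.ind with
  | _ u v => simp [Sym2.map_pair_eq]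

lemma buildH_card {W : Finset V'} :
    (buildH G W).card = W.card + 2 * G.edgeFinset.card := by
  have hinj : ∀ b : Bool, Function.Injective (fun v : V' => (v, b)) := by
    intro b x y h; exact congrArg Prod.fst h
  have hAB : Disjoint (G.edgeFinset.image (Sym2.map (fun v => (v, false))))
      (G.edgeFinset.image (Sym2.map (fun v => (v, true)))) := by
    rw [Finset.disjoint_left]
    intro ε h1 h2
    have := (aux_snd_of_mem_image G h1).symm.trans (aux_snd_of_mem_image G h2)
    simp [Sym2.eq_iff] at this
  have hC : Disjoint ((G.edgeFinset.image (Sym2.map (fun v => (v, false))) ∪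
      G.edgeFinset.image (Sym2.map (fun v => (v, true)))))
      (W.image (fun w => s((w, false), (w, true)))) := by
    rw [Finset.disjoint_left]
    intro ε h1 h2
    obtain ⟨w, _, rfl⟩ := Finset.mem_image.1 h2
    rcases Finset.mem_union.1 h1 with h | h <;>
    · have := aux_snd_of_mem_image G h
      simp [Sym2.map_pair_eq, Sym2.eq_iff] at this
  rw [buildH, Finset.card_union_of_disjoint hC, Finset.card_union_of_disjoint hAB,
    Finset.card_image_of_injective _ (Sym2.map.injective (hinj false)),
    Finset.card_image_of_injective _ (Sym2.map.injective (hinj true)),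
    Finset.card_image_of_injective]
  · ring
  · intro x y h
    simp only [Sym2.eq_iff] at h
    rcases h with ⟨h, _⟩ | ⟨h, _⟩ <;> simp_all

lemma buildH_tc {W : Finset V'} (hW : ∀ u v : V', G.Adj u v → u ∈ W ∨ v ∈ W) :
    tcVC G (buildH G W) := by
  intro e he i
  induction e using Sym2.ind with
  | _ u v =>
  have hadj : G.Adj u v := by rwa [mem_edgeFinset, mem_edgeSet] at he
  have hne : u ≠ v := hadj.ne
  -- basic adjacency facts in the big graph
  have hlevel : ∀ b : Bool, (fromEdgeSet ((buildH G W : Finset (Sym2 (V' × Bool))) :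
      Set (Sym2 (V' × Bool)))).Adj (u, b) (v, b) := by
    intro b
    rw [fromEdgeSet_adj]
    constructor
    · refine Finset.mem_coe.2 (Finset.mem_union.2 (Or.inl (Finset.mem_union.2 ?_)))
      cases b
      · exact Or.inl (Finset.mem_image.2 ⟨s(u,v), he, by simp [Sym2.map_pair_eq]⟩)
      · exact Or.inr (Finset.mem_image.2 ⟨s(u,v), he, by simp [Sym2.map_pair_eq]⟩)
    · simp [hne]
  have hvert : ∀ w ∈ W, (fromEdgeSet ((buildH G W : Finset (Sym2 (V' × Bool))) :
      Set (Sym2 (V' × Bool)))).Adj (w, false) (w, true) := by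
    intro w hw
    rw [fromEdgeSet_adj]
    refine ⟨Finset.mem_coe.2 (Finset.mem_union.2 (Or.inr
      (Finset.mem_image.2 ⟨w, hw, rfl⟩))), by simp⟩
  fin_cases i
  -- topic 0
  · obtain ⟨w, hwuv, hwW⟩ : ∃ w, (w = u ∨ w = v) ∧ w ∈ W := by
      rcases hW u v hadj with h | h
      exacts [⟨u, Or.inl rfl, h⟩, ⟨v, Or.inr rfl, h⟩]
    set S := ((interested s(u,v) (0 : Fin 3) : Finset (V' × Bool)) : Set (V' × Bool)) with hS
    have hwS : ∀ b : Bool, ((w, b) : V' × Bool) ∈ S := by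
      intro b
      rcases hwuv with rfl | rfl <;> simp [hS, aux_mem_interested0]
    have hstep : ∀ x : S, ¬ (x : V' × Bool).1 = w →
        ((fromEdgeSet ((buildH G W : Finset (Sym2 (V' × Bool))) :
          Set (Sym2 (V' × Bool)))).induce S).Adj x ⟨(w, (x : V' × Bool).2), hwS _⟩ := by
      intro x hxw
      rw [comap_adj]
      have hx := aux_mem_interested0.1 (Finset.mem_coe.1 x.2)
      show (fromEdgeSet ((buildH G W : Finset (Sym2 (V' × Bool))) :
          Set (Sym2 (V' × Bool)))).Adj ((x : V' × Bool).1, (x : V' × Bool).2)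
          (w, (x : V' × Bool).2)
      rcases Sym2.mem_iff.1 hx with h | h <;> rcases hwuv with rfl | rfl
      · exact absurd h hxw
      · rw [h]; exact hlevel _
      · rw [h]; exact (hlevel _).symm
      · exact absurd h hxw
    have hvertR : ((fromEdgeSet ((buildH G W : Finset (Sym2 (V' × Bool))) :
        Set (Sym2 (V' × Bool)))).induce S).Reachable ⟨(w, false), hwS _⟩ ⟨(w, true), hwS _⟩ := by
      apply Adj.reachable
      rw [comap_adj]
      exact hvert w hwW
    have hpivot : ∀ x : S, ((fromEdgeSet ((buildH G W : Finset (Sym2 (V' × Bool))) :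
        Set (Sym2 (V' × Bool)))).induce S).Reachable x ⟨(w, false), hwS _⟩ := by
      intro x
      by_cases hxw : (x : V' × Bool).1 = w
      · have hxeq : (x : V' × Bool) = (w, (x : V' × Bool).2) := by
          rw [← hxw]
        cases hb : (x : V' × Bool).2
        · have : x = ⟨(w, false), hwS _⟩ := Subtype.ext (by rw [hxeq, hb])
          rw [this]
        · have : x = ⟨(w, true), hwS _⟩ := Subtype.ext (by rw [hxeq, hb])
          rw [this]
          exact hvertR.symm
      · have h1 := (hstep x hxw).reachable
        cases hb : (x : V' × Bool).2
        · rw [hb] at h1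
          exact h1
        · rw [hb] at h1
          exact h1.trans hvertR.symm
    intro x y
    exact (hpivot x).trans (hpivot y).symm
  -- topic 1
  · intro x y
    have hx := aux_mem_interested1.1 (Finset.mem_coe.1 x.2)
    have hy := aux_mem_interested1.1 (Finset.mem_coe.1 y.2)
    by_cases hxy : (x : V' × Bool).1 = (y : V' × Bool).1
    · have : x = y := Subtype.ext (Prod.ext hxy (hx.2.trans hy.2.symm))
      rw [this]
    · apply Adj.reachable
      rw [comap_adj]
      show (fromEdgeSet ((buildH G W : Finset (Sym2 (V' × Bool))) :
          Set (Sym2 (V' × Bool)))).Adj ((x : V' × Bool).1, (x : V' × Bool).2)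
          ((y : V' × Bool).1, (y : V' × Bool).2)
      rw [hx.2, hy.2]
      rcases Sym2.mem_iff.1 hx.1 with h1 | h1 <;> rcases Sym2.mem_iff.1 hy.1 with h2 | h2
      · exact absurd (h1.trans h2.symm) hxy
      · rw [h1, h2]; exact hlevel false
      · rw [h1, h2]; exact (hlevel false).symm
      · exact absurd (h1.trans h2.symm) hxy
  -- topic 2
  · intro x y
    have hx := aux_mem_interested2.1 (Finset.mem_coe.1 x.2)
    have hy := aux_mem_interested2.1 (Finset.mem_coe.1 y.2)
    by_cases hxy : (x : V' × Bool).1 = (y : V' × Bool).1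
    · have : x = y := Subtype.ext (Prod.ext hxy (hx.2.trans hy.2.symm))
      rw [this]
    · apply Adj.reachable
      rw [comap_adj]
      show (fromEdgeSet ((buildH G W : Finset (Sym2 (V' × Bool))) :
          Set (Sym2 (V' × Bool)))).Adj ((x : V' × Bool).1, (x : V' × Bool).2)
          ((y : V' × Bool).1, (y : V' × Bool).2)
      rw [hx.2, hy.2]
      rcases Sym2.mem_iff.1 hx.1 with h1 | h1 <;> rcases Sym2.mem_iff.1 hy.1 with h2 | h2
      · exact absurd (h1.trans h2.symm) hxy
      · rw [h1, h2]; exact hlevel true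
      · rw [h1, h2]; exact (hlevel true).symm
      · exact absurd (h1.trans h2.symm) hxy

lemma aux_lower {H : Finset (Sym2 (V' × Bool))} (hH : tcVC G H) :
    ∃ W : Finset V', (∀ u v : V', G.Adj u v → u ∈ W ∨ v ∈ W) ∧
      W.card + 2 * G.edgeFinset.card ≤ H.card := by
  classical
  set M := H.filter (fun ε => ¬ (Sym2.map Prod.snd ε).IsDiag) with hM
  set D := H.filter (fun ε => (Sym2.map Prod.snd ε).IsDiag) with hD
  set F := (G.edgeFinset.image (Sym2.map (fun v => (v, false))) ∪
    G.edgeFinset.image (Sym2.map (fun v => (v, true)))) with hF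
  have hFD : F ⊆ D := by
    intro ε hε
    rw [hD, Finset.mem_filter]
    constructor
    · rcases Finset.mem_union.1 hε with h | h
      · obtain ⟨e, he, rfl⟩ := Finset.mem_image.1 h
        exact aux_forced_mem G hH he false
      · obtain ⟨e, he, rfl⟩ := Finset.mem_image.1 h
        exact aux_forced_mem G hH he true
    · rcases Finset.mem_union.1 hε with h | h <;>
      · rw [aux_snd_of_mem_image G h]; simp
  have hinj : ∀ b : Bool, Function.Injective (fun v : V' => (v, b)) := by
    intro b x y h; exact congrArg Prod.fst h
  have hAB : Disjoint (G.edgeFinset.image (Sym2.map (fun v => (v, false))))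
      (G.edgeFinset.image (Sym2.map (fun v => (v, true)))) := by
    rw [Finset.disjoint_left]
    intro ε h1 h2
    have := (aux_snd_of_mem_image G h1).symm.trans (aux_snd_of_mem_image G h2)
    simp [Sym2.eq_iff] at this
  have hFcard : F.card = 2 * G.edgeFinset.card := by
    rw [hF, Finset.card_union_of_disjoint hAB,
      Finset.card_image_of_injective _ (Sym2.map.injective (hinj false)),
      Finset.card_image_of_injective _ (Sym2.map.injective (hinj true))]
    ring
  have hcard : D.card + M.card = H.card :=
    Finset.card_filter_add_card_filter_not
      (p := fun ε => (Sym2.map Prod.snd ε).IsDiag)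
  refine ⟨M.image (fun ε => ε.out.1.1), ?_, ?_⟩
  · intro u v huv
    have he : s(u,v) ∈ G.edgeFinset := by rwa [mem_edgeFinset, mem_edgeSet]
    obtain ⟨ε, hεH, hmix, hmem⟩ := aux_mixed_mem G hH he
    have hεM : ε ∈ M := Finset.mem_filter.2 ⟨hεH, hmix⟩
    have hout : ε.out.1 ∈ interested s(u,v) 0 := hmem _ (Sym2.out_fst_mem ε)
    have h1 : ε.out.1.1 ∈ s(u,v) := aux_mem_interested0.1 hout
    rcases Sym2.mem_iff.1 h1 with h | h
    · left; rw [← h]; exact Finset.mem_image.2 ⟨ε, hεM, rfl⟩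
    · right; rw [← h]; exact Finset.mem_image.2 ⟨ε, hεM, rfl⟩
  · have h1 : (M.image (fun ε => ε.out.1.1)).card ≤ M.card := Finset.card_image_le
    have h2 : F.card ≤ D.card := Finset.card_le_card hFD
    omega

end Main

/-- `G` has a minimum vertex cover of size `k` if and only if the Min-TCO instance
constructed from `G` has a minimum topic-connected edge set of size `k + 2|E'|`. -/
theorem min_vc_iff_min_tco {V' : Type*} [Fintype V'] [DecidableEq V']
    (G : SimpleGraph V') [DecidableRel G.Adj] (k : ℕ) :
    IsLeast {n : ℕ | ∃ W : Finset V',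
        (∀ u v : V', G.Adj u v → u ∈ W ∨ v ∈ W) ∧ W.card = n} k ↔
    IsLeast {n : ℕ | ∃ H : Finset (Sym2 (V' × Bool)), tcVC G H ∧ H.card = n}
      (k + 2 * G.edgeFinset.card) := by
  constructor
  · rintro ⟨⟨W, hWc, hWcard⟩, hlb⟩
    constructor
    · exact ⟨buildH G W, buildH_tc G hWc, by rw [buildH_card, hWcard]⟩
    · rintro m ⟨H, hH, rfl⟩
      obtain ⟨W', hW'c, hle⟩ := aux_lower G hH
      have hk : k ≤ W'.card := hlb ⟨W', hW'c, rfl⟩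
      omega
  · rintro ⟨⟨H, hH, hHcard⟩, hlb⟩
    have hlbVC : ∀ n ∈ {n : ℕ | ∃ W : Finset V',
        (∀ u v : V', G.Adj u v → u ∈ W ∨ v ∈ W) ∧ W.card = n}, k ≤ n := by
      rintro n ⟨W, hWc, rfl⟩
      have := hlb ⟨buildH G W, buildH_tc G hWc, buildH_card G⟩
      omega
    obtain ⟨W, hWc, hle⟩ := aux_lower G hH
    have h1 : k ≤ W.card := hlbVC _ ⟨W, hWc, rfl⟩
    exact ⟨⟨W, hWc, by omega⟩, hlbVC⟩
end

section
/- Let U, T, INT be a Min-TCO instance with |U_t| ≤ d for every t ∈ T, and construct the hitting set instance with ground set X = {{u,v} : u,v ∈ U, u ≠ v} and set system S = ⋃_{t∈T} S_t, where S_t is the characteristic system of edges on U_t. Then H ⊆ X is a hitting set of S if and only if H is a topic-connected edge set for the Min-TCO instance; moreover every member of S has size at most ⌊d/2⌋·⌈d/2⌉. -/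
/-- The characteristic system of edges on a finite vertex set `S`: the cut edge sets of
all partitions of `S` into two nonempty parts. -/
def charSys {V : Type*} [DecidableEq V] (S : Finset V) : Finset (Finset (Sym2 V)) :=
  (S.powerset.filter fun A => A.Nonempty ∧ A ≠ S).image fun A => cutEdges A (S \ A)

/-- Along any walk from a vertex satisfying `p` to one not satisfying `p`,
some edge crosses the boundary. -/
lemma cross_lemma {V : Type*} {G : SimpleGraph V} (p : V → Prop) :
    ∀ {u v : V}, G.Walk u v → p u → ¬ p v →
      ∃ x y, G.Adj x y ∧ p x ∧ ¬ p y := by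
  intro u v w
  induction w with
  | nil => intro h1 h2; exact absurd h1 h2
  | @cons a b c h w ih =>
    intro hu hv
    by_cases hb : p b
    · exact ih hb hv
    · exact ⟨a, b, h, hu, hb⟩

lemma mul_le_halves {a b d : ℕ} (h : a + b ≤ d) :
    a * b ≤ d / 2 * ((d + 1) / 2) := by
  have key : ∀ x y : ℕ, 4 * x ≤ 4 * y + 1 → x ≤ y := by omega
  rcases Nat.even_or_odd d with ⟨k, hk⟩ | ⟨k, hk⟩
  · have h1 : d / 2 = k := by omega
    have h2 : (d + 1) / 2 = k := by omega
    rw [h1, h2]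
    have : (a : ℤ) * b ≤ (k : ℤ) * k := by
      have hab : (a : ℤ) + b ≤ 2 * k := by exact_mod_cast (by omega : a + b ≤ 2 * k)
      nlinarith [sq_nonneg ((a : ℤ) - b), Int.natCast_nonneg a, Int.natCast_nonneg b]
    exact_mod_cast this
  · have h1 : d / 2 = k := by omega
    have h2 : (d + 1) / 2 = k + 1 := by omega
    rw [h1, h2]
    refine key _ _ ?_
    have : 4 * ((a : ℤ) * b) ≤ 4 * ((k : ℤ) * (k + 1)) + 1 := by
      have hab : (a : ℤ) + b ≤ 2 * k + 1 := by exact_mod_cast (by omega : a + b ≤ 2 * k + 1)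
      nlinarith [sq_nonneg ((a : ℤ) - b), Int.natCast_nonneg a, Int.natCast_nonneg b]
    exact_mod_cast this

/-- For a Min-TCO instance with `|U_t| ≤ d` for all `t`, consider the hitting set
instance whose set system is `S = ⋃_t S_t`, the union of the characteristic systems on
the sets `U_t`.  Then `H` is a hitting set of `S` iff `H` is topic-connected, and every
member of `S` has size at most `⌊d/2⌋·⌈d/2⌉`. -/
theorem tco_to_hitting_set {U T : Type*} [Fintype U] [Fintype T]
    [DecidableEq U] [DecidableEq T] (INT : U → Finset T) (d : ℕ)
    (hd : ∀ t : T, (Ut INT t).card ≤ d) (H : Finset (Sym2 U)) :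
    ((∀ P ∈ Finset.univ.biUnion fun t : T => charSys (Ut INT t), (H ∩ P).Nonempty) ↔
        topicConnected INT H) ∧
    (∀ P ∈ Finset.univ.biUnion fun t : T => charSys (Ut INT t),
        P.card ≤ d / 2 * ((d + 1) / 2)) := by
  classical
  constructor
  · constructor
    · -- hitting set → topic connected
      intro hhit t u v
      by_contra hne
      let G := (SimpleGraph.fromEdgeSet (H : Set (Sym2 U))).induce
        ((Ut INT t : Finset U) : Set U)
      let A : Finset U := (Ut INT t).filter
        (fun x => ∃ hx : x ∈ ((Ut INT t : Finset U) : Set U), G.Reachable u ⟨x, hx⟩)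
      have hAS : A ⊆ Ut INT t := Finset.filter_subset _ _
      have huA : (u : U) ∈ A :=
        Finset.mem_filter.mpr ⟨u.2, u.2, by rw [Subtype.coe_eta]⟩
      have hvA : (v : U) ∉ A := by
        intro hv
        obtain ⟨_, w, hr⟩ := Finset.mem_filter.mp hv
        rw [Subtype.coe_eta] at hr
        exact hne hr
      have hAne : A ≠ Ut INT t := fun h => hvA (by rw [h]; exact Finset.mem_coe.mp v.2)
      have hmem : cutEdges A (Ut INT t \ A) ∈
          Finset.univ.biUnion fun t : T => charSys (Ut INT t) := by
        refine Finset.mem_biUnion.mpr ⟨t, Finset.mem_univ t, ?_⟩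
        exact Finset.mem_image.mpr ⟨A, Finset.mem_filter.mpr
          ⟨Finset.mem_powerset.mpr hAS, ⟨_, huA⟩, hAne⟩, rfl⟩
      obtain ⟨e, he⟩ := hhit _ hmem
      rw [Finset.mem_inter] at he
      obtain ⟨heH, heP⟩ := he
      obtain ⟨⟨x, y⟩, hxy, rfl⟩ := Finset.mem_image.mp heP
      rw [Finset.mem_product] at hxy
      obtain ⟨hx, hy⟩ := hxy
      rw [Finset.mem_sdiff] at hy
      have hxS : x ∈ ((Ut INT t : Finset U) : Set U) := hAS hx
      have hyS : y ∈ ((Ut INT t : Finset U) : Set U) := hy.1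
      have hne' : x ≠ y := fun h => hy.2 (h ▸ hx)
      have hadj : G.Adj ⟨x, hxS⟩ ⟨y, hyS⟩ := by
        show (SimpleGraph.fromEdgeSet (H : Set (Sym2 U))).Adj x y
        rw [SimpleGraph.fromEdgeSet_adj]
        exact ⟨heH, hne'⟩
      obtain ⟨_, hxr⟩ := (Finset.mem_filter.mp hx).2
      exact hy.2 (Finset.mem_filter.mpr ⟨hy.1, hyS, hxr.trans hadj.reachable⟩)
    · -- topic connected → hitting set
      intro htc P hP
      obtain ⟨t, -, hPt⟩ := Finset.mem_biUnion.mp hP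
      obtain ⟨A, hAmem, rfl⟩ := Finset.mem_image.mp hPt
      rw [Finset.mem_filter, Finset.mem_powerset] at hAmem
      obtain ⟨hAS, hAne, hAneq⟩ := hAmem
      set S := Ut INT t with hS
      obtain ⟨u, hu⟩ := hAne
      have hSA : (S \ A).Nonempty := by
        rw [Finset.sdiff_nonempty]
        exact fun h => hAneq (Finset.Subset.antisymm hAS h)
      obtain ⟨v, hv⟩ := hSA
      have huS : u ∈ ((S : Finset U) : Set U) := hAS hu
      have hvS : v ∈ ((S : Finset U) : Set U) := (Finset.mem_sdiff.mp hv).1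
      obtain ⟨w⟩ := htc t ⟨u, huS⟩ ⟨v, hvS⟩
      have hvnA : v ∉ A := (Finset.mem_sdiff.mp hv).2
      obtain ⟨x, y, hadj, hxA, hyA⟩ :=
        cross_lemma (fun z : ((S : Finset U) : Set U) => (z : U) ∈ A) w hu hvnA
      rw [SimpleGraph.comap_adj, SimpleGraph.fromEdgeSet_adj] at hadj
      refine ⟨s((x : U), (y : U)), Finset.mem_inter.mpr ⟨hadj.1, ?_⟩⟩
      exact Finset.mem_image.mpr ⟨⟨x, y⟩, Finset.mem_product.mpr
        ⟨hxA, Finset.mem_sdiff.mpr ⟨y.2, hyA⟩⟩, rfl⟩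
  · -- size bound
    intro P hP
    obtain ⟨t, -, hPt⟩ := Finset.mem_biUnion.mp hP
    obtain ⟨A, hAmem, rfl⟩ := Finset.mem_image.mp hPt
    rw [Finset.mem_filter, Finset.mem_powerset] at hAmem
    obtain ⟨hAS, -, -⟩ := hAmem
    calc (cutEdges A (Ut INT t \ A)).card
        ≤ (A ×ˢ (Ut INT t \ A)).card := Finset.card_image_le
      _ = A.card * (Ut INT t \ A).card := Finset.card_product _ _
      _ ≤ d / 2 * ((d + 1) / 2) := by
          apply mul_le_halves
          rw [Finset.card_sdiff_of_subset hAS]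
          have h1 : A.card ≤ (Ut INT t).card := Finset.card_le_card hAS
          have h2 := hd t
          omega
end
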